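/- Linear special case: Under the hypotheses of the finite time stability theorem with f ≡ 0 (so L = 0 and m = 0), if [1 + b₀q_u·T^q/(δ·Γ(q+1))]·E_q(σ(p+1)T^q) < ε/δ, then every solution with ‖ψ‖_∞ < δ and ‖u(t)‖ ≤ q_u satisfies ‖x(t)‖ < ε for all t ∈ [0,T]. -/

import Mathlib

/-!
Write `I^q` for the Riemann–Liouville integral and `K = sup_{[-τm, 0]} ‖x‖ + b₀ q_u T^q / Γ(q + 1)`.
The integral equation gives `‖x t‖ ≤ K + σ (p + 1) I^q g (t)` for every `g` that dominates `‖x‖`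
on `[-τm, s]` at each `s ∈ [0, t]`, the delays being absorbed by taking `g` nondecreasing.
Since `I^q (t^(kq) / Γ(kq + 1)) = t^((k+1)q) / Γ((k+1)q + 1)` (a Beta integral), iterating this
inequality from a uniform bound `M` bounds `‖x t‖` by a partial sum of `K E_q(σ (p + 1) T^q)` plus
`M` times the next term of that series, which tends to `0`: the series converges because
`Γ(x + 1) ≥ R^(x - 1) e^(-R)` for every `R ≥ 1`. The hypothesis on the parameters says exactly
that `K E_q(σ (p + 1) T^q) < ε`.
-/

open Set Real MeasureTheory

noncomputable def mittagLeffler (q z : ℝ) : ℝ :=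
  ∑' k : ℕ, z ^ k / Real.Gamma (k * q + 1)

open Filter Topology

theorem Real.rpow_sub_one_mul_exp_neg_le_Gamma {R x : ℝ} (hR : 1 ≤ R) (hx : 1 ≤ x) :
    R ^ (x - 1) * exp (-R) ≤ Gamma (x + 1) := by
  set j := ⌊x⌋₊
  have hj : (1 : ℝ) ≤ j := by exact_mod_cast Nat.le_floor (by simpa using hx)
  have hxj : x - 1 ≤ j := by linarith [Nat.lt_floor_add_one x]
  calc R ^ (x - 1) * exp (-R) ≤ R ^ (j : ℝ) * exp (-R) := by
        gcongr
    _ ≤ j.factorial := by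
        rw [rpow_natCast, exp_neg, ← div_eq_mul_inv, div_le_iff₀ (exp_pos R), mul_comm,
          ← div_le_iff₀ (by positivity)]
        exact pow_div_factorial_le_exp R (by linarith) j
    _ = Gamma (j + 1) := (Gamma_nat_eq_factorial j).symm
    _ ≤ Gamma (x + 1) := Gamma_strictMonoOn_Ici.monotoneOn (by simp; linarith)
        (by simp; linarith) (by linarith [Nat.floor_le (by linarith : 0 ≤ x)])

theorem summable_mittagLeffler {q : ℝ} (hq : 0 < q) (z : ℝ) :
    Summable fun k : ℕ => z ^ k / Gamma (k * q + 1) := by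
  obtain ⟨R, hR, hRz⟩ : ∃ R : ℝ, 1 ≤ R ∧ 2 * |z| ≤ R ^ q :=
    ((eventually_ge_atTop 1).and ((tendsto_rpow_atTop hq).eventually_ge_atTop _)).exists
  refine .of_norm_bounded_eventually_nat (summable_geometric_two.mul_left (R * exp R)) ?_
  filter_upwards [(tendsto_natCast_atTop_atTop.atTop_mul_const hq).eventually_ge_atTop 1]
    with k hk
  have hR0 : 0 < R := by linarith
  have hΓ := rpow_sub_one_mul_exp_neg_le_Gamma hR hk
  have hΓ0 : 0 < Gamma (k * q + 1) := (by positivity : 0 < R ^ (k * q - 1) * exp (-R)).trans_le hΓ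
  rw [norm_div, norm_pow, norm_eq_abs, norm_of_nonneg hΓ0.le, div_le_iff₀ hΓ0]
  calc |z| ^ k ≤ (R ^ q) ^ k * (1 / 2) ^ k := by
        rw [← mul_pow]; gcongr; linarith
    _ = R * exp R * (1 / 2) ^ k * (R ^ ((k : ℝ) * q - 1) * exp (-R)) := by
        rw [rpow_sub_one hR0.ne', ← rpow_natCast, ← rpow_mul hR0.le, mul_comm q, exp_neg]
        field_simp
    _ ≤ R * exp R * (1 / 2) ^ k * Gamma (k * q + 1) := by gcongr

theorem one_le_mittagLeffler {q z : ℝ} (hq : 0 < q) (hz : 0 ≤ z) : 1 ≤ mittagLeffler q z := by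
  simpa [mittagLeffler] using (summable_mittagLeffler hq z).le_tsum 0 fun k _ => by
    have := Gamma_pos_of_pos (by positivity : (0:ℝ) < k * q + 1)
    positivity

theorem integral_sub_rpow_mul_rpow {q β t : ℝ} (hq : 0 < q) (hβ : -1 < β) (ht : 0 < t) :
    ∫ s in (0:ℝ)..t, (t - s) ^ (q - 1) * s ^ β
      = Gamma q * Gamma (β + 1) / Gamma (q + β + 1) * t ^ (q + β) := by
  have hbeta := Complex.betaIntegral_eq_Gamma_mul_div (β + 1) q (by simp; linarith)
    (by simpa using hq)
  have hscaled := Complex.betaIntegral_scaled (β + 1) q ht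
  apply Complex.ofReal_injective
  rw [← intervalIntegral.integral_ofReal]
  calc ∫ s in (0:ℝ)..t, (((t - s) ^ (q - 1) * s ^ β : ℝ) : ℂ)
      = ∫ s in (0:ℝ)..t, (s : ℂ) ^ ((β + 1 : ℂ) - 1) * ((t : ℂ) - s) ^ ((q : ℂ) - 1) := by
        refine intervalIntegral.integral_congr fun s hs => ?_
        rw [uIcc_of_le ht.le] at hs
        rw [Complex.ofReal_mul, Complex.ofReal_cpow hs.1, Complex.ofReal_cpow (by linarith [hs.2])]
        push_cast; ring_nf
    _ = _ := by
        rw [hscaled, hbeta]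
        push_cast [Complex.ofReal_cpow ht.le, ← Complex.Gamma_ofReal]
        ring_nf

/-- The Riemann–Liouville integral `I^q f (t)` with base point `0`. -/
noncomputable def rlIntegral (q : ℝ) (f : ℝ → ℝ) (t : ℝ) : ℝ :=
  (Gamma q)⁻¹ * ∫ s in (0:ℝ)..t, (t - s) ^ (q - 1) * f s

section RiemannLiouville

variable {q t : ℝ} {f g : ℝ → ℝ}

theorem intervalIntegrable_sub_rpow_mul (hq : 0 < q) (hf : ContinuousOn f (uIcc 0 t)) :
    IntervalIntegrable (fun s => (t - s) ^ (q - 1) * f s) volume 0 t := by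
  have hker := ((intervalIntegral.intervalIntegrable_rpow' (a := 0) (b := t)
    (show -1 < q - 1 by linarith)).comp_sub_left t).symm
  simp only [sub_zero, sub_self] at hker
  exact hker.mul_continuousOn hf

theorem rlIntegral_add (hf : IntervalIntegrable (fun s => (t - s) ^ (q - 1) * f s) volume 0 t)
    (hg : IntervalIntegrable (fun s => (t - s) ^ (q - 1) * g s) volume 0 t) :
    rlIntegral q (fun s => f s + g s) t = rlIntegral q f t + rlIntegral q g t := by
  simp only [rlIntegral, mul_add, intervalIntegral.integral_add hf hg]

theorem rlIntegral_const_mul (c : ℝ) :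
    rlIntegral q (fun s => c * f s) t = c * rlIntegral q f t := by
  simp only [rlIntegral, mul_left_comm _ c, intervalIntegral.integral_const_mul]

theorem rlIntegral_sum {ι : Type*} (S : Finset ι) {f : ι → ℝ → ℝ}
    (hf : ∀ i ∈ S, IntervalIntegrable (fun s => (t - s) ^ (q - 1) * f i s) volume 0 t) :
    rlIntegral q (fun s => ∑ i ∈ S, f i s) t = ∑ i ∈ S, rlIntegral q (f i) t := by
  simp only [rlIntegral, Finset.mul_sum, intervalIntegral.integral_finsetSum hf]

theorem rlIntegral_rpow_div_Gamma {β : ℝ} (hq : 0 < q) (hβ : -1 < β) (ht : 0 < t) :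
    rlIntegral q (fun s => s ^ β / Gamma (β + 1)) t = t ^ (q + β) / Gamma (q + β + 1) := by
  have hΓq := (Gamma_pos_of_pos hq).ne'
  have hΓβ := (Gamma_pos_of_pos (by linarith : 0 < β + 1)).ne'
  simp only [div_eq_inv_mul _ (Gamma (β + 1)), rlIntegral_const_mul]
  rw [rlIntegral, integral_sub_rpow_mul_rpow hq hβ ht]
  field_simp

theorem norm_integral_sub_rpow_smul_le {E : Type*} [NormedAddCommGroup E] [NormedSpace ℝ E]
    {F : ℝ → E} (hq : 0 < q) (ht : 0 ≤ t) (hF : ∀ s ∈ Ioc 0 t, ‖F s‖ ≤ g s)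
    (hg : IntervalIntegrable (fun s => (t - s) ^ (q - 1) * g s) volume 0 t) :
    ‖(Gamma q)⁻¹ • ∫ s in (0:ℝ)..t, (t - s) ^ (q - 1) • F s‖ ≤ rlIntegral q g t := by
  rw [norm_smul, norm_inv, norm_of_nonneg (Gamma_pos_of_pos hq).le, rlIntegral]
  gcongr
  refine intervalIntegral.norm_integral_le_of_norm_le ht (ae_of_all _ fun s hs => ?_) hg
  have hts : 0 ≤ t - s := by linarith [hs.2]
  rw [norm_smul, norm_of_nonneg (rpow_nonneg hts _)]
  exact mul_le_mul_of_nonneg_left (hF s hs) (rpow_nonneg hts _)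

end RiemannLiouville

/-- `t ^ (k q) / Γ (k q + 1)`, the `k`-fold Riemann–Liouville integral of order `q` of `1`. -/
noncomputable def fracMonomial (q : ℝ) (k : ℕ) (t : ℝ) : ℝ :=
  t ^ (k * q) / Gamma (k * q + 1)

section FracMonomial

variable {q t : ℝ} {k : ℕ}

@[simp]
theorem fracMonomial_zero (q t : ℝ) : fracMonomial q 0 t = 1 := by
  simp [fracMonomial]

theorem fracMonomial_nonneg (hq : 0 ≤ q) (ht : 0 ≤ t) : 0 ≤ fracMonomial q k t :=
  div_nonneg (rpow_nonneg ht _) (Gamma_pos_of_pos (by positivity)).le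

theorem continuous_fracMonomial (hq : 0 ≤ q) : Continuous (fracMonomial q k) :=
  (continuous_rpow_const (by positivity)).div_const _

theorem monotoneOn_fracMonomial (hq : 0 ≤ q) : MonotoneOn (fracMonomial q k) (Ici 0) :=
  fun _ hs _ _ hst => div_le_div_of_nonneg_right
    (rpow_le_rpow hs hst (by positivity)) (Gamma_pos_of_pos (by positivity)).le

theorem rlIntegral_fracMonomial (hq : 0 < q) (ht : 0 < t) :
    rlIntegral q (fracMonomial q k) t = fracMonomial q (k + 1) t := by
  have hk : ((k + 1 : ℕ) : ℝ) * q = q + k * q := by push_cast; ring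
  have hkq : -1 < (k : ℝ) * q := by linarith [show (0 : ℝ) ≤ k * q by positivity]
  rw [fracMonomial, hk, ← rlIntegral_rpow_div_Gamma hq hkq ht]
  rfl

theorem rlIntegral_const (c : ℝ) (hq : 0 < q) (ht : 0 < t) :
    rlIntegral q (fun _ => c) t = c * fracMonomial q 1 t := by
  have h1 := rlIntegral_fracMonomial (k := 0) hq ht
  simp only [funext (fracMonomial_zero q), zero_add] at h1
  simpa [h1] using rlIntegral_const_mul (q := q) (t := t) (f := fun _ => 1) c

theorem pow_mul_fracMonomial (a : ℝ) (ht : 0 ≤ t) :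
    a ^ k * fracMonomial q k t = (a * t ^ q) ^ k / Gamma (k * q + 1) := by
  rw [fracMonomial, mul_pow, ← rpow_natCast (t ^ q), ← rpow_mul ht, mul_comm q, mul_div_assoc]

end FracMonomial

/-- The `N`-th Picard iterate of `φ ↦ K + a I^q φ` started at the constant `M`. -/
noncomputable def fracGronwallBound (q a K M : ℝ) (N : ℕ) (t : ℝ) : ℝ :=
  K * ∑ k ∈ Finset.range N, a ^ k * fracMonomial q k t + M * (a ^ N * fracMonomial q N t)

section FracGronwallBound

variable {q a K M t : ℝ} {N : ℕ}

theorem continuous_fracGronwallBound (hq : 0 ≤ q) : Continuous (fracGronwallBound q a K M N) := by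
  have := fun k => continuous_fracMonomial (k := k) hq
  unfold fracGronwallBound
  fun_prop

theorem monotoneOn_fracGronwallBound (hq : 0 ≤ q) (ha : 0 ≤ a) (hK : 0 ≤ K) (hM : 0 ≤ M) :
    MonotoneOn (fracGronwallBound q a K M N) (Ici 0) := fun s hs t ht hst => by
  have hmono := fun k => monotoneOn_fracMonomial (k := k) hq hs ht hst
  unfold fracGronwallBound
  gcongr with k
  · exact hmono k
  · exact hmono N

theorem fracGronwallBound_zero : fracGronwallBound q a K M 0 t = M := by
  simp [fracGronwallBound]

theorem fracGronwallBound_succ_zero (hq : q ≠ 0) : fracGronwallBound q a K M (N + 1) 0 = K := by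
  have hpos : ∀ k : ℕ, ((k : ℝ) + 1) * q ≠ 0 := fun k => mul_ne_zero k.cast_add_one_ne_zero hq
  simp [fracGronwallBound, fracMonomial, Finset.sum_range_succ', zero_rpow (hpos _)]

theorem fracGronwallBound_succ (hq : 0 < q) (ht : 0 < t) :
    fracGronwallBound q a K M (N + 1) t
      = K + a * rlIntegral q (fracGronwallBound q a K M N) t := by
  have hint : ∀ f : ℝ → ℝ, Continuous f →
      IntervalIntegrable (fun s => (t - s) ^ (q - 1) * f s) volume 0 t :=
    fun f hf => intervalIntegrable_sub_rpow_mul hq hf.continuousOn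
  have := fun k => continuous_fracMonomial (k := k) hq.le
  unfold fracGronwallBound
  simp only [Finset.mul_sum]
  rw [rlIntegral_add (hint _ (by fun_prop)) (hint _ (by fun_prop)),
    rlIntegral_sum _ fun k _ => hint _ (by fun_prop)]
  simp only [rlIntegral_const_mul, rlIntegral_fracMonomial hq ht, Finset.sum_range_succ',
    fracMonomial_zero]
  simp only [mul_add, Finset.mul_sum]
  ring_nf

theorem tendsto_fracGronwallBound (hq : 0 < q) (ht : 0 ≤ t) :
    Tendsto (fun N => fracGronwallBound q a K M N t) atTop
      (𝓝 (K * mittagLeffler q (a * t ^ q))) := by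
  have hs := summable_mittagLeffler hq (a * t ^ q)
  simpa [fracGronwallBound, pow_mul_fracMonomial a ht, mittagLeffler] using
    (hs.hasSum.tendsto_sum_nat.const_mul K).add (hs.tendsto_atTop_zero.const_mul M)

end FracGronwallBound

section DelayGronwall

variable {y : ℝ → ℝ} {q a K M τm T : ℝ}

theorem le_fracGronwallBound_of_le_add_rlIntegral (hq : 0 < q) (ha : 0 ≤ a) (hK : 0 ≤ K)
    (hM₀ : 0 ≤ M) (hM : ∀ t ∈ Icc (-τm) T, y t ≤ M) (hhist : ∀ t ∈ Icc (-τm) 0, y t ≤ K)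
    (hstep : ∀ t ∈ Ioc 0 T, ∀ g : ℝ → ℝ, Continuous g →
      (∀ s ∈ Icc 0 t, ∀ r ∈ Icc (-τm) s, y r ≤ g s) → y t ≤ K + a * rlIntegral q g t)
    (N : ℕ) : ∀ t ∈ Icc (-τm) T, y t ≤ fracGronwallBound q a K M N (max t 0) := by
  induction N with
  | zero => simpa only [fracGronwallBound_zero] using hM
  | succ N ih =>
    intro t ht
    rcases le_or_gt t 0 with ht0 | ht0
    · rw [max_eq_right ht0, fracGronwallBound_succ_zero hq.ne']
      exact hhist t ⟨ht.1, ht0⟩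
    · rw [max_eq_left ht0.le, fracGronwallBound_succ hq ht0]
      refine hstep t ⟨ht0, ht.2⟩ _ (continuous_fracGronwallBound hq.le) fun s hs r hr => ?_
      exact (ih r ⟨hr.1, hr.2.trans (hs.2.trans ht.2)⟩).trans
        (monotoneOn_fracGronwallBound hq.le ha hK hM₀ (le_max_right r 0) hs.1 (max_le hr.2 hs.1))

theorem le_mul_mittagLeffler_of_le_add_rlIntegral (hq : 0 < q) (ha : 0 ≤ a) (hK : 0 ≤ K)
    (hM₀ : 0 ≤ M) (hT : 0 ≤ T) (hM : ∀ t ∈ Icc (-τm) T, y t ≤ M)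
    (hhist : ∀ t ∈ Icc (-τm) 0, y t ≤ K)
    (hstep : ∀ t ∈ Ioc 0 T, ∀ g : ℝ → ℝ, Continuous g →
      (∀ s ∈ Icc 0 t, ∀ r ∈ Icc (-τm) s, y r ≤ g s) → y t ≤ K + a * rlIntegral q g t) :
    ∀ t ∈ Icc (-τm) T, y t ≤ K * mittagLeffler q (a * T ^ q) := fun t ht =>
  ge_of_tendsto' (tendsto_fracGronwallBound hq hT) fun N =>
    (le_fracGronwallBound_of_le_add_rlIntegral hq ha hK hM₀ hM hhist hstep N t ht).trans
      (monotoneOn_fracGronwallBound hq.le ha hK hM₀ (le_max_right t 0) hT (max_le ht.2 hT))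

end DelayGronwall

section DelayedLinearSystem

variable {E U ι : Type*} [NormedAddCommGroup E] [NormedSpace ℝ E] [NormedAddCommGroup U]
  [NormedSpace ℝ U] [Fintype ι] {A₀ : E →L[ℝ] E} {A : ι → E →L[ℝ] E} {B₀ : U →L[ℝ] E}
  {σ b₀ qu : ℝ}

theorem norm_add_sum_apply_add_le (hσ : ‖A₀‖ ≤ σ) (hσi : ∀ i, ‖A i‖ ≤ σ) (hb : ‖B₀‖ ≤ b₀)
    {g : ℝ} {v : E} {w : ι → E} {e : U} (hv : ‖v‖ ≤ g) (hw : ∀ i, ‖w i‖ ≤ g) (he : ‖e‖ ≤ qu) :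
    ‖A₀ v + ∑ i, A i (w i) + B₀ e‖ ≤ σ * (Fintype.card ι + 1) * g + b₀ * qu := by
  have hsum : ‖∑ i, A i (w i)‖ ≤ Fintype.card ι * (σ * g) := by
    simpa using norm_sum_le_of_le Finset.univ fun i _ => (A i).le_of_opNorm_le_of_le (hσi i) (hw i)
  calc ‖A₀ v + ∑ i, A i (w i) + B₀ e‖
      ≤ ‖A₀ v‖ + ‖∑ i, A i (w i)‖ + ‖B₀ e‖ := norm_add₃_le
    _ ≤ σ * g + Fintype.card ι * (σ * g) + b₀ * qu := by
        gcongr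
        · exact A₀.le_of_opNorm_le_of_le hσ hv
        · exact B₀.le_of_opNorm_le_of_le hb he
    _ = σ * (Fintype.card ι + 1) * g + b₀ * qu := by ring

theorem norm_le_add_rlIntegral_of_eq_integral {x : ℝ → E} {u : ℝ → U} {τ : ι → ℝ}
    {q t τm : ℝ} {g : ℝ → ℝ} (hq : 0 < q) (ht : 0 < t) (hσ : ‖A₀‖ ≤ σ)
    (hσi : ∀ i, ‖A i‖ ≤ σ) (hb : ‖B₀‖ ≤ b₀) (hτm : 0 ≤ τm) (hτ : ∀ i, 0 ≤ τ i ∧ τ i ≤ τm)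
    (hu : ∀ s ∈ Ioc 0 t, ‖u s‖ ≤ qu) (hg : Continuous g)
    (hxg : ∀ s ∈ Icc 0 t, ∀ r ∈ Icc (-τm) s, ‖x r‖ ≤ g s)
    (hsol : x t = x 0 + (Gamma q)⁻¹ • ∫ s in (0:ℝ)..t, (t - s) ^ (q - 1) •
      (A₀ (x s) + ∑ i, A i (x (s - τ i)) + B₀ (u s))) :
    ‖x t‖ ≤ ‖x 0‖ + b₀ * qu * fracMonomial q 1 t
      + σ * (Fintype.card ι + 1) * rlIntegral q g t := by
  have hint : ∀ f : ℝ → ℝ, Continuous f →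
      IntervalIntegrable (fun s => (t - s) ^ (q - 1) * f s) volume 0 t :=
    fun f hf => intervalIntegrable_sub_rpow_mul hq hf.continuousOn
  have hforcing : ∀ s ∈ Ioc 0 t, ‖A₀ (x s) + ∑ i, A i (x (s - τ i)) + B₀ (u s)‖
      ≤ σ * (Fintype.card ι + 1) * g s + b₀ * qu := fun s hs => by
    have hs' := Ioc_subset_Icc_self hs
    refine norm_add_sum_apply_add_le hσ hσi hb (hxg s hs' s ⟨by linarith [hs.1], le_rfl⟩)
      (fun i => hxg s hs' _ ⟨?_, ?_⟩) (hu s hs) <;> linarith [hτ i, hs.1]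
  rw [hsol]
  refine (norm_add_le _ _).trans ?_
  rw [add_assoc]
  gcongr
  refine (norm_integral_sub_rpow_smul_le hq ht.le hforcing (hint _ (by fun_prop))).trans_eq ?_
  rw [rlIntegral_add (hint _ (by fun_prop)) (hint _ (by fun_prop)), rlIntegral_const_mul,
    rlIntegral_const _ hq ht]
  ring

theorem norm_le_mul_mittagLeffler_of_eq_integral {x : ℝ → E} {u : ℝ → U} {τ : ι → ℝ}
    {q T τm δ : ℝ} (hq : 0 < q) (hT : 0 ≤ T) (hτm : 0 ≤ τm) (hσ : ‖A₀‖ ≤ σ)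
    (hσi : ∀ i, ‖A i‖ ≤ σ) (hb : ‖B₀‖ ≤ b₀) (hτ : ∀ i, 0 ≤ τ i ∧ τ i ≤ τm)
    (hu : ∀ t ∈ Icc 0 T, ‖u t‖ ≤ qu) (hx : ContinuousOn x (Icc (-τm) T))
    (hhist : ∀ t ∈ Icc (-τm) 0, ‖x t‖ ≤ δ)
    (hsol : ∀ t ∈ Ioc 0 T, x t = x 0 + (Gamma q)⁻¹ • ∫ s in (0:ℝ)..t, (t - s) ^ (q - 1) •
      (A₀ (x s) + ∑ i, A i (x (s - τ i)) + B₀ (u s))) :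
    ∀ t ∈ Icc (-τm) T, ‖x t‖ ≤ (δ + b₀ * qu * fracMonomial q 1 T)
      * mittagLeffler q (σ * (Fintype.card ι + 1) * T ^ q) := by
  obtain ⟨t₁, -, hmax⟩ :=
    isCompact_Icc.exists_isMaxOn (nonempty_Icc.2 (by linarith)) hx.norm
  have hc : 0 ≤ b₀ * qu := mul_nonneg ((norm_nonneg _).trans hb)
    ((norm_nonneg _).trans (hu 0 ⟨le_rfl, hT⟩))
  have h0 : ‖x 0‖ ≤ δ := hhist 0 ⟨neg_nonpos.2 hτm, le_rfl⟩
  have hK : δ ≤ δ + b₀ * qu * fracMonomial q 1 T :=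
    le_add_of_nonneg_right (mul_nonneg hc (fracMonomial_nonneg hq.le hT))
  refine le_mul_mittagLeffler_of_le_add_rlIntegral hq (by positivity [(norm_nonneg _).trans hσ])
    ((norm_nonneg _).trans (h0.trans hK)) (norm_nonneg (x t₁)) hT (fun t ht => hmax ht)
    (fun t ht => (hhist t ht).trans hK) fun t ht g hg hxg => ?_
  refine (norm_le_add_rlIntegral_of_eq_integral hq ht.1 hσ hσi hb hτm hτ
    (fun s hs => hu s ⟨hs.1.le, hs.2.trans ht.2⟩) hg hxg (hsol t ht)).trans ?_
  gcongr
  exact monotoneOn_fracMonomial hq.le ht.1.le hT ht.2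

end DelayedLinearSystem

theorem finite_time_stability_linear_general
    (n nu p : ℕ) (q T τm δ ε qu σ b₀ : ℝ)
    (hq : 0 < q) (hT : 0 < T) (hτ : 0 ≤ τm)
    (hδ : 0 < δ)
    (A₀ : (Fin n → ℝ) →L[ℝ] (Fin n → ℝ))
    (A : Fin p → ((Fin n → ℝ) →L[ℝ] (Fin n → ℝ)))
    (B₀ : (Fin nu → ℝ) →L[ℝ] (Fin n → ℝ))
    (τ : Fin p → ℝ) (hτi : ∀ i, 0 < τ i ∧ τ i ≤ τm)
    (hσ : ‖A₀‖ ≤ σ) (hσi : ∀ i, ‖A i‖ ≤ σ) (hb : ‖B₀‖ ≤ b₀)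
    (u : ℝ → Fin nu → ℝ) (hu : ∀ t ∈ Icc (0:ℝ) T, ‖u t‖ ≤ qu)
    (x : ℝ → Fin n → ℝ)
    (hx_cont : ContinuousOn x (Icc (-τm) T))
    (hψ : ∀ t ∈ Icc (-τm) (0:ℝ), ‖x t‖ < δ)
    (hsol : ∀ t ∈ Icc (0:ℝ) T,
      x t = x 0 + (Real.Gamma q)⁻¹ •
        ∫ s in (0:ℝ)..t, (t - s) ^ (q - 1) •
          (A₀ (x s) + (∑ i : Fin p, A i (x (s - τ i))) + B₀ (u s)))
    (hcrit : (1 + b₀ * qu * T ^ q / (δ * Real.Gamma (q + 1)))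
        * mittagLeffler q (σ * (p + 1) * T ^ q) < ε / δ) :
    ∀ t ∈ Icc (0:ℝ) T, ‖x t‖ < ε := by
  obtain ⟨t₀, ht₀, hmax₀⟩ := isCompact_Icc.exists_isMaxOn (nonempty_Icc.2 (neg_nonpos.2 hτ))
    (hx_cont.mono (Icc_subset_Icc_right hT.le)).norm
  have hbound := norm_le_mul_mittagLeffler_of_eq_integral hq hT.le hτ hσ hσi hb
    (fun i => ⟨(hτi i).1.le, (hτi i).2⟩) hu hx_cont (fun t ht => hmax₀ ht)
    fun t ht => hsol t (Ioc_subset_Icc_self ht)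
  rw [Fintype.card_fin] at hbound
  have hK : ‖x t₀‖ + b₀ * qu * fracMonomial q 1 T
      < δ * (1 + b₀ * qu * T ^ q / (δ * Gamma (q + 1))) := by
    have hΓ : 0 < Gamma (q + 1) := Gamma_pos_of_pos (by linarith)
    simp only [fracMonomial, Nat.cast_one, one_mul]
    field_simp
    linarith [mul_lt_mul_of_pos_right (hψ t₀ ht₀) hΓ]
  have hE : 0 < mittagLeffler q (σ * (p + 1) * T ^ q) :=
    one_pos.trans_le (one_le_mittagLeffler hq (by positivity [(norm_nonneg _).trans hσ]))
  intro t ht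
  calc ‖x t‖ ≤ _ := hbound t ⟨by linarith [ht.1], ht.2⟩
    _ < _ := mul_lt_mul_of_pos_right hK hE
    _ < δ * (ε / δ) := by rw [mul_assoc]; gcongr
    _ = ε := mul_div_cancel₀ _ hδ.ne'

/-- Finite time stability, linear case (f ≡ 0). -/
theorem finite_time_stability_linear
    (n nu p : ℕ) (q T τm δ ε qu σ b₀ : ℝ)
    (hq : 0 < q) (hq1 : q ≤ 1) (hT : 0 < T) (hτ : 0 ≤ τm)
    (hδ : 0 < δ) (hε : 0 < ε) (hqu : 0 < qu)
    (A₀ : (Fin n → ℝ) →L[ℝ] (Fin n → ℝ))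
    (A : Fin p → ((Fin n → ℝ) →L[ℝ] (Fin n → ℝ)))
    (B₀ : (Fin nu → ℝ) →L[ℝ] (Fin n → ℝ))
    (τ : Fin p → ℝ) (hτi : ∀ i, 0 < τ i ∧ τ i ≤ τm)
    (hσ : ‖A₀‖ ≤ σ) (hσi : ∀ i, ‖A i‖ ≤ σ) (hb : ‖B₀‖ ≤ b₀)
    (u : ℝ → Fin nu → ℝ) (hu : ∀ t ∈ Icc (0:ℝ) T, ‖u t‖ ≤ qu)
    (x : ℝ → Fin n → ℝ)
    (hx_cont : ContinuousOn x (Icc (-τm) T))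
    (hψ : ∀ t ∈ Icc (-τm) (0:ℝ), ‖x t‖ < δ)
    (hsol : ∀ t ∈ Icc (0:ℝ) T,
      x t = x 0 + (Real.Gamma q)⁻¹ •
        ∫ s in (0:ℝ)..t, (t - s) ^ (q - 1) •
          (A₀ (x s) + (∑ i : Fin p, A i (x (s - τ i))) + B₀ (u s)))
    (hcrit : (1 + b₀ * qu * T ^ q / (δ * Real.Gamma (q + 1)))
        * mittagLeffler q (σ * (p + 1) * T ^ q) < ε / δ) :
    ∀ t ∈ Icc (0:ℝ) T, ‖x t‖ < ε :=
  finite_time_stability_linear_general n nu p q T τm δ ε qu σ b₀ hq hT hτ hδ A₀ A B₀ τ hτi hσ hσi hb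
    u hu x hx_cont hψ hsol hcrit
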